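/- Let G be a group with finite generating set X such that G is not minimally almost convex with respect to X. Then for arbitrarily large n, the Cayley graph Γ(G,X) contains an isometrically embedded circle (closed loop) of length at least 2n + 2, namely the loop formed by a geodesic-witnessing path of length 2n inside B(n) together with the length-2 path between its endpoints. -/

import Mathlib

variable {G : Type*} [Group G]

/-- Word length of `g` with respect to the generating set `X` (generators and inverses allowed). -/
noncomputable def wLen (X : Set G) (g : G) : ℕ :=
  sInf {n | ∃ w : List G, (∀ s ∈ w, s ∈ X ∨ s⁻¹ ∈ X) ∧ w.prod = g ∧ w.length = n}

/-- Word metric associated to `X`. -/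
noncomputable def wDist (X : Set G) (g h : G) : ℕ := wLen X (g⁻¹ * h)

/-- One step in the Cayley graph of `(G, X)`. -/
def IsStep (X : Set G) (a b : G) : Prop := ∃ s, (s ∈ X ∨ s⁻¹ ∈ X) ∧ b = a * s

/-- A (nonempty) edge path in the Cayley graph, recorded as its list of vertices. -/
def IsPath (X : Set G) (p : List G) : Prop := p ≠ [] ∧ List.Chain' (IsStep X) p

/-- The path stays in the ball of radius `n` about the identity. -/
def InBall (X : Set G) (n : ℕ) (p : List G) : Prop := ∀ a ∈ p, wLen X a ≤ n

/-- Length (number of edges) of a path given by its vertex list. -/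
def pLen (p : List G) : ℕ := p.length - 1

/-!
Take `n`, `a`, `b` as in the failure of minimal almost convexity, with `n ≥ 2`. The path
`a → 1 → b` through geodesics lies in the ball, so `|a| = |b| = n`, and the middle vertex `g` of a
path `a → g → b` of length 2 lies outside the ball, so `|g| = n + 1`. Closing up with geodesics
from `1` to `a` and from `b` to `1` gives a loop of length `2n + 2` whose `k`-th vertex has length
`min k (2n + 2 - k)`. Vertices on the same side of `g` are therefore as far apart as along the loop.
A shortcut between vertices on opposite sides, spliced into the loop, would give a path from `a`
to `b` inside the ball of length less than `2n`.
-/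

def IsWord (X : Set G) (w : List G) : Prop := ∀ s ∈ w, s ∈ X ∨ s⁻¹ ∈ X

namespace IsWord

variable {X : Set G} {w w' : List G}

lemma append (hw : IsWord X w) (hw' : IsWord X w') : IsWord X (w ++ w') := by
  intro s hs
  rcases List.mem_append.mp hs with h | h
  exacts [hw s h, hw' s h]

lemma take (hw : IsWord X w) (k : ℕ) : IsWord X (w.take k) :=
  fun s hs => hw s (List.mem_of_mem_take hs)

lemma drop (hw : IsWord X w) (k : ℕ) : IsWord X (w.drop k) :=
  fun s hs => hw s (List.mem_of_mem_drop hs)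

lemma map_inv_reverse (hw : IsWord X w) : IsWord X (w.map (·⁻¹)).reverse := by
  intro s hs
  obtain ⟨t, ht, rfl⟩ := List.mem_map.mp (List.mem_reverse.mp hs)
  rw [inv_inv]
  exact (hw t ht).symm

lemma isStep_prod_take_succ (hw : IsWord X w) {k : ℕ} (hk : k < w.length) :
    IsStep X (w.take k).prod (w.take (k + 1)).prod :=
  ⟨w[k], hw _ (List.getElem_mem hk), List.prod_take_succ w k hk⟩

end IsWord

section WordMetric

variable {X : Set G}

lemma wLen_prod_le_length {w : List G} (hw : IsWord X w) : wLen X w.prod ≤ w.length :=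
  Nat.sInf_le ⟨w, hw, rfl, rfl⟩

lemma exists_isWord_length_eq_wLen (hXgen : Subgroup.closure X = ⊤) (g : G) :
    ∃ w : List G, IsWord X w ∧ w.length = wLen X g ∧ w.prod = g := by
  have hg : g ∈ (Subgroup.closure X).toSubmonoid := by simp [hXgen]
  rw [Subgroup.closure_toSubmonoid] at hg
  obtain ⟨w, hw, rfl⟩ := Submonoid.exists_list_of_mem_closure hg
  obtain ⟨w', hw', hprod, hlen⟩ : wLen X w.prod ∈ _ := Nat.sInf_mem ⟨w.length, w, hw, rfl, rfl⟩
  exact ⟨w', hw', hlen, hprod⟩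

@[simp]
lemma wLen_one : wLen X (1 : G) = 0 :=
  Nat.le_zero.mp (wLen_prod_le_length (w := []) (by simp [IsWord]))

lemma wLen_mul_le (hXgen : Subgroup.closure X = ⊤) (g h : G) :
    wLen X (g * h) ≤ wLen X g + wLen X h := by
  obtain ⟨u, hu, hu_len, rfl⟩ := exists_isWord_length_eq_wLen hXgen g
  obtain ⟨v, hv, hv_len, rfl⟩ := exists_isWord_length_eq_wLen hXgen h
  simpa [hu_len, hv_len] using wLen_prod_le_length (hu.append hv)

lemma wLen_inv_le (hXgen : Subgroup.closure X = ⊤) (g : G) : wLen X g⁻¹ ≤ wLen X g := by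
  obtain ⟨w, hw, hw_len, rfl⟩ := exists_isWord_length_eq_wLen hXgen g
  simpa [List.prod_inv_reverse, hw_len] using wLen_prod_le_length hw.map_inv_reverse

lemma wLen_inv (hXgen : Subgroup.closure X = ⊤) (g : G) : wLen X g⁻¹ = wLen X g :=
  (wLen_inv_le hXgen g).antisymm (by simpa using wLen_inv_le hXgen g⁻¹)

@[simp]
lemma wDist_self (g : G) : wDist X g g = 0 := by
  simp [wDist]

@[simp]
lemma wDist_one_left (g : G) : wDist X 1 g = wLen X g := by
  simp [wDist]

lemma wDist_one_right (hXgen : Subgroup.closure X = ⊤) (g : G) : wDist X g 1 = wLen X g := by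
  simp [wDist, wLen_inv hXgen]

lemma wDist_comm (hXgen : Subgroup.closure X = ⊤) (g h : G) : wDist X g h = wDist X h g := by
  rw [wDist, wDist, ← wLen_inv hXgen, mul_inv_rev, inv_inv]

lemma wDist_triangle (hXgen : Subgroup.closure X = ⊤) (g h k : G) :
    wDist X g k ≤ wDist X g h + wDist X h k := by
  simpa [wDist, mul_assoc] using wLen_mul_le hXgen (g⁻¹ * h) (h⁻¹ * k)

lemma wLen_le_wLen_add_wDist (hXgen : Subgroup.closure X = ⊤) (g h : G) :
    wLen X h ≤ wLen X g + wDist X g h := by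
  simpa using wDist_triangle hXgen 1 g h

lemma wDist_le_one_of_isStep {g h : G} (hgh : IsStep X g h) : wDist X g h ≤ 1 := by
  obtain ⟨s, hs, rfl⟩ := hgh
  simpa [wDist] using wLen_prod_le_length (X := X) (w := [s]) (by simpa [IsWord] using hs)

lemma wDist_le_sub_of_isStep (hXgen : Subgroup.closure X = ⊤) {f : ℕ → G} {p q : ℕ}
    (hpq : p ≤ q) (hstep : ∀ k, p ≤ k → k < q → IsStep X (f k) (f (k + 1))) :
    wDist X (f p) (f q) ≤ q - p := by
  induction q, hpq using Nat.le_induction with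
  | base => simp
  | succ q hpq ih =>
    have h₁ := ih fun k hpk hkq => hstep k hpk (by omega)
    have h₂ := wDist_le_one_of_isStep (hstep q hpq (by omega))
    have htri := wDist_triangle hXgen (f p) (f q) (f (q + 1))
    omega

end WordMetric

def BallWalk (X : Set G) (n L : ℕ) (a b : G) : Prop :=
  ∃ w : List G, IsWord X w ∧ w.length = L ∧ a * w.prod = b ∧
    ∀ k, wLen X (a * (w.take k).prod) ≤ n

namespace BallWalk

variable {X : Set G} {n L L' : ℕ} {a b c : G}

lemma trans (h₁ : BallWalk X n L a b) (h₂ : BallWalk X n L' b c) :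
    BallWalk X n (L + L') a c := by
  obtain ⟨w₁, hw₁, rfl, rfl, hball₁⟩ := h₁
  obtain ⟨w₂, hw₂, rfl, rfl, hball₂⟩ := h₂
  refine ⟨w₁ ++ w₂, hw₁.append hw₂, List.length_append, by simp [mul_assoc], fun k => ?_⟩
  rw [List.take_append, List.prod_append]
  rcases le_or_gt k w₁.length with hk | hk
  · simpa [Nat.sub_eq_zero_of_le hk] using hball₁ k
  · simpa [List.take_of_length_le hk.le, mul_assoc] using hball₂ (k - w₁.length)

lemma two_mul_le (hpaths : ∀ p : List G, IsPath X p → p.head? = some a → p.getLast? = some b →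
      InBall X n p → 2 * n ≤ pLen p)
    (h : BallWalk X n L a b) : 2 * n ≤ L := by
  obtain ⟨w, hw, rfl, rfl, hball⟩ := h
  set p := (List.range (w.length + 1)).map fun k => a * (w.take k).prod
  have hpath : IsPath X p := by
    refine ⟨by simp [p], ?_⟩
    rw [List.Chain', List.isChain_map, List.isChain_range_succ]
    intro k hk
    simpa [IsStep, mul_assoc] using hw.isStep_prod_take_succ hk
  have hhead : p.head? = some a := by
    simp [p, List.range_succ_eq_map]
  have hlast : p.getLast? = some (a * w.prod) := by
    simp [p, List.getLast?_map, List.range_succ]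
  have hin : InBall X n p := by
    simp only [InBall, p, List.mem_map]
    rintro _ ⟨k, -, rfl⟩
    exact hball k
  simpa [pLen, p] using hpaths p hpath hhead hlast hin

end BallWalk

lemma ballWalk_wDist {X : Set G} (hXgen : Subgroup.closure X = ⊤) {n : ℕ} {a b : G}
    (h : wLen X a + wLen X b + wDist X a b ≤ 2 * n + 1) : BallWalk X n (wDist X a b) a b := by
  obtain ⟨w, hw, hw_len, hw_prod⟩ := exists_isWord_length_eq_wLen hXgen (a⁻¹ * b)
  change w.length = wDist X a b at hw_len
  refine ⟨w, hw, hw_len, by simp [hw_prod], fun k => ?_⟩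
  have hb : wLen X b ≤ wLen X a + wDist X a b := wLen_le_wLen_add_wDist hXgen a b
  have h_take : wLen X (a * (w.take k).prod) ≤ wLen X a + min k (wDist X a b) := by
    have hlen := wLen_prod_le_length (hw.take k)
    rw [List.length_take, hw_len] at hlen
    have hmul := wLen_mul_le hXgen a (w.take k).prod
    omega
  have h_drop : wLen X (a * (w.take k).prod) ≤ wLen X b + (wDist X a b - k) := by
    have hsplit : a * (w.take k).prod = b * ((w.drop k).prod)⁻¹ := by
      rw [← mul_inv_cancel_left a b, ← hw_prod, ← List.prod_take_mul_prod_drop w k]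
      group
    have hlen := wLen_prod_le_length (hw.drop k)
    rw [List.length_drop, hw_len] at hlen
    have hmul := wLen_mul_le hXgen b ((w.drop k).prod)⁻¹
    rw [wLen_inv hXgen] at hmul
    rw [hsplit]
    omega
  omega

section NotAlmostConvex

variable {X : Set G} {n : ℕ} {a b : G}

lemma wLen_eq_of_forall_ballWalk (hXgen : Subgroup.closure X = ⊤) (ha : wLen X a ≤ n)
    (hb : wLen X b ≤ n) (hwalk : ∀ L, BallWalk X n L a b → 2 * n ≤ L) :
    wLen X a = n ∧ wLen X b = n := by
  have h := hwalk _ <|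
    (ballWalk_wDist hXgen (a := a) (b := 1) (by simp [wDist_one_right hXgen]; omega)).trans
      (ballWalk_wDist hXgen (a := 1) (b := b) (by simp; omega))
  simp only [wDist_one_left, wDist_one_right hXgen] at h
  omega

lemma wLen_eq_add_one_of_forall_ballWalk (hXgen : Subgroup.closure X = ⊤) (hn : 2 ≤ n)
    (ha : wLen X a ≤ n) (hb : wLen X b ≤ n) (hwalk : ∀ L, BallWalk X n L a b → 2 * n ≤ L)
    {g : G} (hag : IsStep X a g) (hgb : IsStep X g b) : wLen X g = n + 1 := by
  have h₁ := wDist_le_one_of_isStep hag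
  have h₂ := wDist_le_one_of_isStep hgb
  have hg_le := wLen_le_wLen_add_wDist hXgen a g
  by_contra hg
  have hlen := hwalk _ <|
    (ballWalk_wDist hXgen (b := g) (by omega)).trans (ballWalk_wDist hXgen (b := b) (by omega))
  omega

end NotAlmostConvex

/-- The walk `1 = f 0, …, f (2n+2) = 1` moves by at most one step at a time, and its vertex
`f (n+1)` opposite `1` lies at distance `n+1` from `1` while its two neighbours lie at distance `n`. -/
structure IsAntipodalLoop (X : Set G) (n : ℕ) (f : ℕ → G) : Prop where
  wDist_le : ∀ p q, p ≤ q → q ≤ 2 * n + 2 → wDist X (f p) (f q) ≤ q - p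
  start : f 0 = 1
  finish : f (2 * n + 2) = 1
  wLen_left : wLen X (f n) = n
  wLen_mid : wLen X (f (n + 1)) = n + 1
  wLen_right : wLen X (f (n + 2)) = n

namespace IsAntipodalLoop

variable {X : Set G} {n : ℕ} {f : ℕ → G}

lemma wLen_eq (hXgen : Subgroup.closure X = ⊤) (hf : IsAntipodalLoop X n f) {k : ℕ}
    (hk : k ≤ 2 * n + 2) : wLen X (f k) = min k (2 * n + 2 - k) := by
  have h₀ : wLen X (f k) ≤ k := by
    simpa [hf.start] using hf.wDist_le 0 k (Nat.zero_le k) hk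
  have h₁ : wLen X (f k) ≤ 2 * n + 2 - k := by
    simpa [hf.finish, wDist_one_right hXgen] using hf.wDist_le k _ hk le_rfl
  rcases lt_trichotomy k (n + 1) with hlt | rfl | hgt
  · have hdist := hf.wDist_le k n (by omega) (by omega)
    have htri := wLen_le_wLen_add_wDist hXgen (f k) (f n)
    rw [hf.wLen_left] at htri
    omega
  · rw [hf.wLen_mid]
    omega
  · have hdist := hf.wDist_le (n + 2) k (by omega) hk
    have htri := wLen_le_wLen_add_wDist hXgen (f k) (f (n + 2))
    rw [hf.wLen_right, wDist_comm hXgen] at htri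
    omega

lemma min_le_wDist (hXgen : Subgroup.closure X = ⊤) (hf : IsAntipodalLoop X n f)
    (hwalk : ∀ L, BallWalk X n L (f n) (f (n + 2)) → 2 * n ≤ L) {p q : ℕ} (hpq : p ≤ q)
    (hq : q ≤ 2 * n + 2) : min (q - p) (2 * n + 2 - (q - p)) ≤ wDist X (f p) (f q) := by
  have hp_len := hf.wLen_eq hXgen (hpq.trans hq)
  have hq_len := hf.wLen_eq hXgen hq
  have hpq_len := wLen_le_wLen_add_wDist hXgen (f p) (f q)
  have hqp_len := wLen_le_wLen_add_wDist hXgen (f q) (f p)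
  rw [wDist_comm hXgen (f q)] at hqp_len
  by_cases hsame : n < p ∨ q < n + 2
  · omega
  -- Otherwise a shortcut from `f p` to `f q`, spliced into the loop, is a walk from `f n` to
  -- `f (n + 2)` inside the ball that is shorter than `2 * n`.
  by_contra hshort
  have hpn := hf.wDist_le p n (by omega) (by omega)
  have hqn := hf.wDist_le (n + 2) q (by omega) hq
  have hn_len := hf.wLen_left
  have hn₂_len := hf.wLen_right
  have hlen := hwalk _ <|
    ((ballWalk_wDist hXgen (a := f n) (b := f p) (by rw [wDist_comm hXgen]; omega)).trans
      (ballWalk_wDist hXgen (b := f q) (by omega))).trans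
      (ballWalk_wDist hXgen (b := f (n + 2)) (by rw [wDist_comm hXgen]; omega))
  rw [wDist_comm hXgen (f n), wDist_comm hXgen (f q)] at hlen
  omega

end IsAntipodalLoop

def IsIsometricCycle (X : Set G) {m : ℕ} (c : ZMod m → G) : Prop :=
  (∀ i : ZMod m, IsStep X (c i) (c (i + 1))) ∧
    ∀ i j : ZMod m, wDist X (c i) (c j) = min (i - j).val (j - i).val

lemma isIsometricCycle_of_closed_walk {X : Set G} (hXgen : Subgroup.closure X = ⊤) {m : ℕ}
    [NeZero m] {f : ℕ → G} (hclosed : f m = f 0) (hstep : ∀ k < m, IsStep X (f k) (f (k + 1)))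
    (hlower : ∀ p q, p ≤ q → q < m → min (q - p) (m - (q - p)) ≤ wDist X (f p) (f q)) :
    IsIsometricCycle X fun i : ZMod m => f i.val := by
  have hupper : ∀ p q, p ≤ q → q ≤ m → wDist X (f p) (f q) ≤ q - p := fun p q hpq hqm =>
    wDist_le_sub_of_isStep hXgen hpq fun k _ hkq => hstep k (by omega)
  refine ⟨fun i => ?_, fun i j => ?_⟩
  · have hsucc : f (i + 1).val = f (i.val + 1) := by
      rw [ZMod.val_add, ZMod.val_one_eq_one_mod, Nat.add_mod_mod]
      rcases (show i.val + 1 ≤ m from i.val_lt).lt_or_eq with h | h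
      · rw [Nat.mod_eq_of_lt h]
      · rw [h, Nat.mod_self, hclosed]
    simpa only [hsucc] using hstep i.val i.val_lt
  wlog hij : i.val ≤ j.val generalizing i j
  · rw [wDist_comm hXgen, min_comm]
    exact this j i (by omega)
  rcases hij.eq_or_lt with h | h
  · obtain rfl := ZMod.val_injective m h
    simp
  have hji : j - i ≠ 0 := sub_ne_zero.mpr fun e => h.ne (congrArg ZMod.val e).symm
  show wDist X (f i.val) (f j.val) = _
  rw [← neg_sub, ZMod.neg_val, if_neg hji, ZMod.val_sub hij]
  have h_arc := hupper i.val j.val hij j.val_lt.le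
  have h_start := hupper 0 i.val (Nat.zero_le _) i.val_lt.le
  have h_end := hupper j.val m j.val_lt.le le_rfl
  have h_around := wDist_triangle hXgen (f j.val) (f 0) (f i.val)
  have h_low := hlower i.val j.val hij j.val_lt
  rw [hclosed] at h_end
  rw [wDist_comm hXgen (f j.val)] at h_around
  have hj := j.val_lt
  omega

lemma exists_isIsometricCycle {X : Set G} (hXgen : Subgroup.closure X = ⊤) {n : ℕ} (hn : 2 ≤ n)
    {a b : G} (ha : wLen X a ≤ n) (hb : wLen X b ≤ n) (hab : wDist X a b = 2)
    (hwalk : ∀ L, BallWalk X n L a b → 2 * n ≤ L) :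
    ∃ c : ZMod (2 * n + 2) → G, IsIsometricCycle X c := by
  obtain ⟨ha_len, hb_len⟩ := wLen_eq_of_forall_ballWalk hXgen ha hb hwalk
  obtain ⟨s, hs, hs_len, hs_prod⟩ := exists_isWord_length_eq_wLen hXgen (a⁻¹ * b)
  obtain ⟨s₁, s₂, rfl⟩ := List.length_eq_two.mp (hs_len.trans hab)
  obtain ⟨u, hu, hu_len, hu_prod⟩ := exists_isWord_length_eq_wLen hXgen a
  obtain ⟨v, hv, hv_len, hv_prod⟩ := exists_isWord_length_eq_wLen hXgen b⁻¹
  rw [ha_len] at hu_len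
  rw [wLen_inv hXgen, hb_len] at hv_len
  have hb_eq : b = a * s₁ * s₂ := by
    rw [← mul_inv_cancel_left a b, ← hs_prod]
    simp [mul_assoc]
  set W := u ++ s₁ :: s₂ :: v with hW
  have hW_word : IsWord X W := hu.append (hs.append hv)
  have hW_len : W.length = 2 * n + 2 := by simp [W, hu_len, hv_len]; omega
  have htake (k : ℕ) : (W.take (n + k)).prod = a * ((s₁ :: s₂ :: v).take k).prod := by
    rw [← hu_len, hW, List.take_length_add_append, List.prod_append, hu_prod]
  have hf_n : (W.take n).prod = a := by simpa using htake 0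
  have hf_n₂ : (W.take (n + 2)).prod = b := by simp [htake, ← mul_assoc, ← hb_eq]
  have hstep : ∀ k < 2 * n + 2, IsStep X (W.take k).prod (W.take (k + 1)).prod := fun k hk =>
    hW_word.isStep_prod_take_succ (by omega)
  have hloop : IsAntipodalLoop X n fun k => (W.take k).prod := by
    refine ⟨fun p q hpq hq => wDist_le_sub_of_isStep hXgen hpq fun k _ hkq => hstep k (by omega),
      by simp, ?_, by rw [hf_n, ha_len], ?_, by rw [hf_n₂, hb_len]⟩
    · rw [show 2 * n + 2 = n + (n + 2) by omega, htake, List.take_of_length_le (by simp [hv_len]),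
        List.prod_cons, List.prod_cons, hv_prod, hb_eq]
      group
    · simpa [htake] using wLen_eq_add_one_of_forall_ballWalk hXgen hn ha hb hwalk
        ⟨s₁, hs s₁ (by simp), rfl⟩ ⟨s₂, hs s₂ (by simp), hb_eq⟩
  exact ⟨_, isIsometricCycle_of_closed_walk hXgen (hloop.finish.trans hloop.start.symm) hstep
    fun p q hpq hq => hloop.min_le_wDist hXgen (by rwa [hf_n, hf_n₂]) hpq hq.le⟩

theorem stmt11_general (X : Set G) (hXgen : Subgroup.closure X = ⊤)
    (hnotmac : ∀ n₀ : ℕ, ∃ n, n₀ ≤ n ∧ ∃ a b : G,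
      wLen X a ≤ n ∧ wLen X b ≤ n ∧ wDist X a b = 2 ∧
      ∀ p : List G, IsPath X p → p.head? = some a → p.getLast? = some b →
        InBall X n p → 2 * n ≤ pLen p) :
    ∀ n₀ : ℕ, ∃ n, n₀ ≤ n ∧ ∃ m : ℕ, 2 * n + 2 ≤ m ∧ ∃ c : ZMod m → G,
      (∀ i : ZMod m, IsStep X (c i) (c (i + 1))) ∧
      (∀ i j : ZMod m, wDist X (c i) (c j) = min (i - j).val (j - i).val) := by
  intro n₀
  obtain ⟨n, hn, a, b, ha, hb, hab, hpaths⟩ := hnotmac (max n₀ 2)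
  obtain ⟨c, hc⟩ := exists_isIsometricCycle hXgen (by omega) ha hb hab
    fun L hL => hL.two_mul_le hpaths
  exact ⟨n, by omega, 2 * n + 2, le_rfl, c, hc⟩

/-- If `(G, X)` is not minimally almost convex, then for arbitrarily large `n` the Cayley
graph contains an isometrically embedded cycle of length at least `2n + 2`. -/
theorem stmt11 (X : Set G) (hXfin : X.Finite) (hXgen : Subgroup.closure X = ⊤)
    (hnotmac : ∀ n₀ : ℕ, ∃ n, n₀ ≤ n ∧ ∃ a b : G,
      wLen X a ≤ n ∧ wLen X b ≤ n ∧ wDist X a b = 2 ∧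
      ∀ p : List G, IsPath X p → p.head? = some a → p.getLast? = some b →
        InBall X n p → 2 * n ≤ pLen p) :
    ∀ n₀ : ℕ, ∃ n, n₀ ≤ n ∧ ∃ m : ℕ, 2 * n + 2 ≤ m ∧ ∃ c : ZMod m → G,
      (∀ i : ZMod m, IsStep X (c i) (c (i + 1))) ∧
      (∀ i j : ZMod m, wDist X (c i) (c j) = min (i - j).val (j - i).val) :=
  stmt11_general X hXgen hnotmac
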